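/- If the joined path γ₁ followed by γ₂ is well-formed (γ₁(1) = γ₂(0)), both γ₁ and γ₂ are continuous paths, and each has finitely many real-part-constancy segments with respect to z₀, then the join γ₁ ++ γ₂ also has finitely many real-part-constancy segments with respect to z₀. -/

import Mathlib

open Complex Filter Topology Polynomial Set

/-- Joining two paths parametrised on `[0,1]`. -/
noncomputable def joinPaths (γ₁ γ₂ : ℝ → ℂ) : ℝ → ℂ :=
  fun t => if t ≤ 1/2 then γ₁ (2 * t) else γ₂ (2 * t - 1)

/-- A predicate `P` admits a finite segmentation of `[a,b]`. -/
inductive FinitePsegments (P : ℝ → Prop) : ℝ → ℝ → Prop where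
  | emptyI (a b : ℝ) (hab : b ≤ a) : FinitePsegments P a b
  | insertI_1 (a b s : ℝ) (hs : s ∈ Set.Ico a b) (h0 : s = a ∨ P s)
      (hP : ∀ t ∈ Set.Ioo s b, P t) (hrec : FinitePsegments P a s) :
      FinitePsegments P a b
  | insertI_2 (a b s : ℝ) (hs : s ∈ Set.Ico a b) (h0 : s = a ∨ P s)
      (hP : ∀ t ∈ Set.Ioo s b, ¬ P t) (hrec : FinitePsegments P a s) :
      FinitePsegments P a b

/-- `[0,1]` decomposes into finitely many consecutive subintervals on each of whose
interiors `Re (γ t - z) = 0` holds identically or fails identically. -/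
def finiteReZSegments (γ : ℝ → ℂ) (z : ℂ) : Prop :=
  FinitePsegments (fun t => (γ t - z).re = 0) 0 1

/-! Transported along `t ↦ 2t` and `t ↦ 2t - 1`, the segmentations of `γ₁` and `γ₂` segment
`[0, 1/2]` and `[1/2, 1]` for the joined path. Putting them side by side fails only when the
junction `1/2` is a breakpoint with `Re (γ t - z₀) ≠ 0` there; the zero set of a continuous
function being closed, both segments adjacent to `1/2` are then of the `≠ 0` kind and merge. -/

namespace FinitePsegments

variable {P Q : ℝ → Prop} {a b : ℝ}

theorem insert {s : ℝ} (hs : s ∈ Ico a b) (h0 : s = a ∨ P s)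
    (hseg : (∀ t ∈ Ioo s b, P t) ∨ ∀ t ∈ Ioo s b, ¬P t) (hrec : FinitePsegments P a s) :
    FinitePsegments P a b :=
  hseg.elim (insertI_1 a b s hs h0 · hrec) (insertI_2 a b s hs h0 · hrec)

@[elab_as_elim]
theorem induction {motive : ∀ b, FinitePsegments P a b → Prop}
    (empty : ∀ b (hb : b ≤ a), motive b (emptyI a b hb))
    (insert : ∀ b s (hs : s ∈ Ico a b) (h0 : s = a ∨ P s)
      (hseg : (∀ t ∈ Ioo s b, P t) ∨ ∀ t ∈ Ioo s b, ¬P t) (hrec : FinitePsegments P a s),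
      motive s hrec → motive b (hrec.insert hs h0 hseg))
    (h : FinitePsegments P a b) : motive b h := by
  induction h with
  | emptyI b hb => exact empty b hb
  | insertI_1 b s hs h0 hP hrec ih => exact insert b s hs h0 (.inl hP) hrec ih
  | insertI_2 b s hs h0 hP hrec ih => exact insert b s hs h0 (.inr hP) hrec ih

theorem mono_right (h : FinitePsegments P a b) {c : ℝ} (hc : c ≤ b) : FinitePsegments P a c := by
  induction h using FinitePsegments.induction generalizing c with
  | empty b hb => exact emptyI a c (hc.trans hb)
  | insert b s hs h0 hseg hrec ih =>
    rcases le_or_gt c s with hcs | hsc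
    · exact ih hcs
    · have hsub : Ioo s c ⊆ Ioo s b := Ioo_subset_Ioo_right hc
      exact hrec.insert ⟨hs.1, hsc⟩ h0
        (hseg.imp (fun h t ht => h t (hsub ht)) fun h t ht => h t (hsub ht))

theorem congr (h : FinitePsegments P a b) (hPQ : ∀ t ∈ Ioo a b, P t ↔ Q t) :
    FinitePsegments Q a b := by
  induction h using FinitePsegments.induction with
  | empty b hb => exact emptyI a b hb
  | insert b s hs h0 hseg _ ih =>
    have hPQ' : ∀ t ∈ Ioo s b, P t ↔ Q t := fun t ht =>
      hPQ t ⟨hs.1.trans_lt ht.1, ht.2⟩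
    refine (ih fun t ht => hPQ t ⟨ht.1, ht.2.trans hs.2⟩).insert hs ?_ ?_
    · rcases eq_or_lt_of_le hs.1 with has | has
      · exact .inl has.symm
      · exact h0.imp_right (hPQ s ⟨has, hs.2⟩).mp
    · exact hseg.imp (fun h t ht => (hPQ' t ht).mp (h t ht))
        fun h t ht => mt (hPQ' t ht).mpr (h t ht)

theorem comp_orderIso (φ : ℝ ≃o ℝ) {a' b' : ℝ} (ha : φ a' = a) (hb : φ b' = b)
    (h : FinitePsegments P a b) : FinitePsegments (P ∘ φ) a' b' := by
  induction h using FinitePsegments.induction generalizing b' with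
  | empty b hb' => exact emptyI _ _ (φ.le_iff_le.mp (hb ▸ ha ▸ hb'))
  | insert b s hs h0 hseg _ ih =>
    subst ha hb
    have hmaps : ∀ t ∈ Ioo (φ.symm s) b', φ t ∈ Ioo s (φ b') := fun t ht =>
      ⟨φ.symm_apply_lt.mp ht.1, φ.lt_iff_lt.mpr ht.2⟩
    refine (ih (φ.apply_symm_apply s)).insert
      ⟨φ.le_symm_apply.mpr hs.1, φ.symm_apply_lt.mpr hs.2⟩ ?_ ?_
    · exact h0.imp (fun h => by rw [h, φ.symm_apply_apply]) fun h => by simpa using h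
    · exact hseg.imp (fun h t ht => h _ (hmaps t ht)) fun h t ht => h _ (hmaps t ht)

theorem append {m : ℝ} (hL : (∀ᶠ t in 𝓝[<] m, P t) → P m) (hR : (∀ᶠ t in 𝓝[>] m, P t) → P m)
    (ham : a ≤ m) (h₁ : FinitePsegments P a m) (h₂ : FinitePsegments P m b) :
    FinitePsegments P a b := by
  induction h₂ using FinitePsegments.induction with
  | empty b hb => exact h₁.mono_right hb
  | insert b s hs h0 hseg _ ih =>
    have hs' : s ∈ Ico a b := ⟨ham.trans hs.1, hs.2⟩
    by_cases hPs : s = a ∨ P s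
    · exact ih.insert hs' hPs hseg
    rw [not_or] at hPs
    obtain rfl : s = m := h0.resolve_right hPs.2
    rcases hseg with hP | hnP
    · exact absurd (hR (eventually_of_mem (Ioo_mem_nhdsGT hs.2) hP)) hPs.2
    cases h₁ with
    | emptyI _ hma => exact absurd (le_antisymm hma ham) hPs.1
    | insertI_1 _ r hr hr0 hP hrec₁ =>
      exact absurd (hL (eventually_of_mem (Ioo_mem_nhdsLT hr.2) hP)) hPs.2
    | insertI_2 _ r hr hr0 hnP' hrec₁ =>
      refine hrec₁.insert ⟨hr.1, hr.2.trans hs.2⟩ hr0 (.inr fun t ht => ?_)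
      rcases lt_trichotomy t s with hts | rfl | hst
      · exact hnP' t ⟨ht.1, hts⟩
      · exact hPs.2
      · exact hnP t ⟨hst, ht.2⟩

theorem append_of_continuousAt {X : Type*} [TopologicalSpace X] {f : ℝ → X} {C : Set X}
    {m : ℝ} (hC : IsClosed C) (hf : ContinuousAt f m) (ham : a ≤ m)
    (h₁ : FinitePsegments (fun t => f t ∈ C) a m) (h₂ : FinitePsegments (fun t => f t ∈ C) m b) :
    FinitePsegments (fun t => f t ∈ C) a b :=
  h₁.append (hC.mem_of_tendsto (hf.mono_left nhdsWithin_le_nhds))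
    (hC.mem_of_tendsto (hf.mono_left nhdsWithin_le_nhds)) ham h₂

end FinitePsegments

section joinPaths

variable {γ₁ γ₂ : ℝ → ℂ} {t : ℝ}

theorem joinPaths_of_le (ht : t ≤ 1 / 2) : joinPaths γ₁ γ₂ t = γ₁ (2 * t) := if_pos ht

theorem joinPaths_of_gt (ht : 1 / 2 < t) : joinPaths γ₁ γ₂ t = γ₂ (2 * t - 1) := if_neg ht.not_ge

theorem continuousOn_joinPaths (hp1 : ContinuousOn γ₁ (Icc 0 1)) (hp2 : ContinuousOn γ₂ (Icc 0 1))
    (hjoin : γ₁ 1 = γ₂ 0) : ContinuousOn (joinPaths γ₁ γ₂) (Icc 0 1) := by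
  refine ContinuousOn.if ?_ ?_ ?_
  · rintro t ⟨-, ht⟩
    rw [show {t : ℝ | t ≤ 1 / 2} = Iic (1 / 2) from rfl, frontier_Iic, mem_singleton_iff] at ht
    norm_num [ht, hjoin]
  · refine hp1.comp (by fun_prop) fun t ht => ?_
    rw [show {t : ℝ | t ≤ 1 / 2} = Iic (1 / 2) from rfl, closure_Iic] at ht
    exact ⟨by linarith [ht.1.1], by linarith [ht.2.out]⟩
  · refine hp2.comp (by fun_prop) fun t ht => ?_
    simp only [not_le, show {t : ℝ | 1 / 2 < t} = Ioi (1 / 2) from rfl, closure_Ioi] at ht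
    exact ⟨by linarith [ht.2.out], by linarith [ht.1.2]⟩

theorem FinitePsegments.joinPaths_left {Q : ℂ → Prop} (h : FinitePsegments (Q ∘ γ₁) 0 1) :
    FinitePsegments (Q ∘ joinPaths γ₁ γ₂) 0 (1 / 2) :=
  (h.comp_orderIso (OrderIso.mulLeft₀ 2 two_pos) (by simp) (by norm_num)).congr fun t ht => by
    simp [joinPaths_of_le ht.2.le]

theorem FinitePsegments.joinPaths_right {Q : ℂ → Prop} (h : FinitePsegments (Q ∘ γ₂) 0 1) :
    FinitePsegments (Q ∘ joinPaths γ₁ γ₂) (1 / 2) 1 :=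
  (h.comp_orderIso ((OrderIso.mulLeft₀ 2 two_pos).trans (OrderIso.addRight (-1)))
    (by norm_num) (by norm_num)).congr fun t ht => by
    simp [joinPaths_of_gt ht.1, sub_eq_add_neg]

end joinPaths

theorem finite_ReZ_segments_joinpaths (γ₁ γ₂ : ℝ → ℂ) (z₀ : ℂ)
    (h1 : finiteReZSegments γ₁ z₀) (h2 : finiteReZSegments γ₂ z₀)
    (hp1 : ContinuousOn γ₁ (Set.Icc 0 1)) (hp2 : ContinuousOn γ₂ (Set.Icc 0 1))
    (hjoin : γ₁ 1 = γ₂ 0) :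
    finiteReZSegments (joinPaths γ₁ γ₂) z₀ := by
  set C : Set ℂ := {z | (z - z₀).re = 0}
  have hC : IsClosed C := isClosed_eq (by fun_prop) continuous_const
  have hcont : ContinuousAt (joinPaths γ₁ γ₂) (1 / 2) :=
    (continuousOn_joinPaths hp1 hp2 hjoin).continuousAt (Icc_mem_nhds (by norm_num) (by norm_num))
  exact FinitePsegments.append_of_continuousAt hC hcont (by norm_num)
    (FinitePsegments.joinPaths_left (Q := (· ∈ C)) h1) (FinitePsegments.joinPaths_right h2)
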